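/- arXiv:1905.12753 — 4 statements merged into one kernel-verified Lean document; each statement's English description precedes it below -/
import Mathlib

section
/- Let S be a finite set of points, each assigned a color, with |S| ≥ 2, and suppose that for every color c₀ the number of points of S with color c₀ is at most ⌊|S|/2⌋. Then S can be partitioned into parts, each of size 2 or 3, such that within each part all points have pairwise distinct colors and at most one part has size 3 (and a part of size 3 occurs only if |S| is odd). -/
/-!
Pair a point of a most frequent color with a point of a most frequent *other* color and
recurse. Removing the pair keeps every color within half of the remaining points once
`|S| ≥ 4`: the two chosen classes each lose a point, and any third class of size `⌊|S|/2⌋`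
would force three classes of that size, more than `|S|` points in total. When `|S| ≤ 3`
the bound `⌊|S|/2⌋ ≤ 1` makes all colors distinct, so `S` itself is a caplet.
-/

open Finset

section CapletDecomposition

variable {X C : Type*}

def IsColorBalanced [DecidableEq C] (c : X → C) (S : Finset X) : Prop :=
  ∀ a : C, #{j ∈ S | c j = a} ≤ #S / 2

structure IsCapletDecomposition [DecidableEq X] (c : X → C) (S : Finset X)
    (P : Finset (Finset X)) : Prop where
  biUnion_eq : P.biUnion id = S
  disjoint : ∀ K ∈ P, ∀ K' ∈ P, K ≠ K' → Disjoint K K'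
  card_eq_two_or_three : ∀ K ∈ P, #K = 2 ∨ #K = 3
  colors_ne : ∀ K ∈ P, ∀ j ∈ K, ∀ j' ∈ K, j ≠ j' → c j ≠ c j'
  card_filter_card_eq_three_le_one : #{K ∈ P | #K = 3} ≤ 1
  odd_card_of_exists_card_eq_three : (∃ K ∈ P, #K = 3) → Odd #S

namespace IsCapletDecomposition

variable [DecidableEq X] {c : X → C} {S K : Finset X} {P : Finset (Finset X)} {x y : X}

lemma subset_of_mem (h : IsCapletDecomposition c S P) (hK : K ∈ P) : K ⊆ S :=
  h.biUnion_eq ▸ subset_biUnion_of_mem id hK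

lemma singleton (h2 : 2 ≤ #S) (h3 : #S ≤ 3) (hc : Set.InjOn c S) :
    IsCapletDecomposition c S {S} where
  biUnion_eq := by simp
  disjoint := by simp
  card_eq_two_or_three K hK := by rw [mem_singleton.1 hK]; omega
  colors_ne K hK j hj j' hj' hne := by
    rw [mem_singleton.1 hK] at hj hj'
    exact fun hcc => hne (hc hj hj' hcc)
  card_filter_card_eq_three_le_one := (card_filter_le _ _).trans (card_singleton S).le
  odd_card_of_exists_card_eq_three := by
    rintro ⟨K, hK, hK3⟩
    rw [mem_singleton.1 hK] at hK3
    exact hK3 ▸ odd_two_mul_add_one 1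

lemma insert_pair (h : IsCapletDecomposition c S P) (hx : x ∉ S) (hy : y ∉ S)
    (hxy : c x ≠ c y) : IsCapletDecomposition c (insert x (insert y S)) (insert {x, y} P) := by
  have hne : x ≠ y := fun h => hxy (congrArg c h)
  have hpair : #{x, y} = 2 := card_pair hne
  have hdisj : ∀ K ∈ P, Disjoint {x, y} K := fun K hK =>
    disjoint_left.2 fun z hz hzK => by
      rcases mem_insert.1 hz with rfl | hz
      · exact hx (h.subset_of_mem hK hzK)
      · exact hy (mem_singleton.1 hz ▸ h.subset_of_mem hK hzK)
  refine ⟨?_, ?_, ?_, ?_, ?_, ?_⟩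
  · ext z
    simp [biUnion_insert, h.biUnion_eq]
  · simp only [mem_insert]
    rintro K (rfl | hK) K' (rfl | hK') hKK'
    · exact absurd rfl hKK'
    · exact hdisj K' hK'
    · exact (hdisj K hK).symm
    · exact h.disjoint K hK K' hK' hKK'
  · rw [forall_mem_insert]
    exact ⟨Or.inl hpair, h.card_eq_two_or_three⟩
  · rw [forall_mem_insert]
    refine ⟨fun j hj j' hj' hjj' => ?_, h.colors_ne⟩
    simp only [mem_insert, mem_singleton] at hj hj'
    rcases hj with rfl | rfl <;> rcases hj' with rfl | rfl <;>
      first | exact absurd rfl hjj' | exact hxy | exact hxy.symm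
  · rw [filter_insert, if_neg (by omega)]
    exact h.card_filter_card_eq_three_le_one
  · rintro ⟨K, hK, hK3⟩
    rcases mem_insert.1 hK with rfl | hK
    · omega
    · rw [card_insert_of_notMem (by simp [hne, hx]), card_insert_of_notMem hy]
      exact (h.odd_card_of_exists_card_eq_three ⟨K, hK, hK3⟩).add_even even_two

end IsCapletDecomposition

lemma card_erase_erase_lt [DecidableEq X] {x y : X} {t : Finset X} (h : x ∈ t ∨ y ∈ t) :
    #((t.erase x).erase y) < #t := by
  rcases h with h | h
  · exact card_erase_le.trans_lt (card_erase_lt_of_mem h)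
  · rw [erase_right_comm]
    exact card_erase_le.trans_lt (card_erase_lt_of_mem h)

section Balanced

variable [DecidableEq C] {c : X → C} {S : Finset X} {x y : X}

lemma exists_mem_forall_card_filter_le (hS : S.Nonempty) :
    ∃ x ∈ S, ∀ a, #{j ∈ S | c j = a} ≤ #{j ∈ S | c j = c x} := by
  obtain ⟨x, hx, hmax⟩ := S.exists_max_image (fun z => #{j ∈ S | c j = c z}) hS
  refine ⟨x, hx, fun a => ?_⟩
  rcases ({j ∈ S | c j = a} : Finset X).eq_empty_or_nonempty with he | ⟨z, hz⟩
  · simp [he]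
  · obtain ⟨hzS, rfl⟩ := mem_filter.1 hz
    exact hmax z hzS

lemma card_filter_add_card_filter_add_card_filter_le {a b d : C}
    (hab : a ≠ b) (had : a ≠ d) (hbd : b ≠ d) :
    #{j ∈ S | c j = a} + #{j ∈ S | c j = b} + #{j ∈ S | c j = d} ≤ #S := by
  have hsum := sum_card_fiberwise_eq_card_filter S {a, b, d} c
  rw [sum_insert (by simp [hab, had]), sum_pair hbd, ← add_assoc] at hsum
  exact hsum ▸ card_filter_le _ _

namespace IsColorBalanced

lemma injOn_of_card_le_three (h : IsColorBalanced c S) (h3 : #S ≤ 3) : Set.InjOn c S := by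
  intro j hj j' hj' hcc
  by_contra hne
  have h2 : 1 < #{i ∈ S | c i = c j} :=
    one_lt_card.2 ⟨j, by simpa using hj, j', by simpa [hcc] using hj', hne⟩
  have := h (c j)
  omega

lemma exists_mem_ne_forall_card_filter_le (h : IsColorBalanced c S) (hx : x ∈ S) :
    ∃ y ∈ S, c y ≠ c x ∧ ∀ a ≠ c x, #{j ∈ S | c j = a} ≤ #{j ∈ S | c j = c y} := by
  set T := {j ∈ S | c j ≠ c x}
  have hT : T.Nonempty := by
    by_contra hT
    have hall : {j ∈ S | c j = c x} = S :=
      filter_true_of_mem fun j hj => by_contra fun hj' => hT ⟨j, mem_filter.2 ⟨hj, hj'⟩⟩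
    have := hall ▸ h (c x)
    have : 0 < #S := card_pos.2 ⟨x, hx⟩
    omega
  have hTfilter : ∀ a ≠ c x, {j ∈ T | c j = a} = {j ∈ S | c j = a} := fun a ha => by
    ext j
    simp only [T, mem_filter, and_assoc]
    exact and_congr_right fun _ => ⟨And.right, fun hj => ⟨hj ▸ ha, hj⟩⟩
  obtain ⟨y, hyT, hymax⟩ := exists_mem_forall_card_filter_le (c := c) hT
  obtain ⟨hy, hyx⟩ := mem_filter.1 hyT
  refine ⟨y, hy, hyx, fun a ha => ?_⟩
  rw [← hTfilter a ha, ← hTfilter (c y) hyx]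
  exact hymax a

lemma erase_erase [DecidableEq X] (h : IsColorBalanced c S) (h4 : 4 ≤ #S) (hx : x ∈ S)
    (hy : y ∈ S) (hyx : c y ≠ c x)
    (hxmax : ∀ a, #{j ∈ S | c j = a} ≤ #{j ∈ S | c j = c x})
    (hymax : ∀ a ≠ c x, #{j ∈ S | c j = a} ≤ #{j ∈ S | c j = c y}) :
    IsColorBalanced c ((S.erase x).erase y) := by
  intro a
  have hcard : #((S.erase x).erase y) = #S - 2 := by
    rw [card_erase_of_mem (mem_erase.2 ⟨fun h => hyx (congrArg c h), hy⟩), card_erase_of_mem hx]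
    omega
  rw [hcard, filter_erase, filter_erase]
  have ha := h a
  by_cases hxya : c x = a ∨ c y = a
  · have := card_erase_erase_lt (x := x) (y := y) (t := {j ∈ S | c j = a})
      (by simpa [hx, hy] using hxya)
    omega
  · rw [not_or] at hxya
    have := card_filter_add_card_filter_add_card_filter_le (S := S) (c := c)
      (Ne.symm hyx) hxya.1 hxya.2
    have := hymax a (Ne.symm hxya.1)
    have := hxmax (c y)
    have : #(({j ∈ S | c j = a}.erase x).erase y) ≤ #{j ∈ S | c j = a} :=
      card_erase_le.trans card_erase_le
    omega

end IsColorBalanced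

end Balanced

lemma IsColorBalanced.exists_isCapletDecomposition [DecidableEq X] [DecidableEq C]
    {c : X → C} {S : Finset X} (h : IsColorBalanced c S) (h2 : 2 ≤ #S) :
    ∃ P, IsCapletDecomposition c S P := by
  induction hn : #S using Nat.strong_induction_on generalizing S with
  | _ n ih =>
  rcases le_or_gt #S 3 with h3 | h4
  · exact ⟨{S}, .singleton h2 h3 (h.injOn_of_card_le_three h3)⟩
  obtain ⟨x, hx, hxmax⟩ :=
    exists_mem_forall_card_filter_le (c := c) (card_pos.1 (by omega : 0 < #S))
  obtain ⟨y, hy, hyx, hymax⟩ := h.exists_mem_ne_forall_card_filter_le hx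
  have hy' : y ∈ S.erase x := mem_erase.2 ⟨fun h => hyx (congrArg c h), hy⟩
  have hcard : #((S.erase x).erase y) = n - 2 := by
    rw [card_erase_of_mem hy', card_erase_of_mem hx]
    omega
  obtain ⟨P, hP⟩ := ih (n - 2) (by omega) (h.erase_erase (by omega) hx hy hyx hxmax hymax)
    (by omega) hcard
  refine ⟨insert {x, y} P, ?_⟩
  have := hP.insert_pair (fun hx' => notMem_erase x S (mem_of_mem_erase hx'))
    (notMem_erase y _) hyx.symm
  rwa [insert_erase hy', insert_erase hx] at this

end CapletDecomposition

/-- A colored set `S` with `|S| ≥ 2` in which every color appears at most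
`⌊|S|/2⌋` times admits a caplet decomposition: a partition into parts of size 2 or 3 with
pairwise distinct colors in each part, at most one part of size 3, and a size-3 part
occurring only if `|S|` is odd. -/
theorem stmt_8 {X C : Type*} [DecidableEq X] [DecidableEq C]
    (S : Finset X) (c : X → C) (hS : 2 ≤ S.card)
    (hcap : ∀ c₀ : C, (S.filter fun j => c j = c₀).card ≤ S.card / 2) :
    ∃ P : Finset (Finset X),
      P.biUnion id = S ∧
      (∀ K ∈ P, ∀ K' ∈ P, K ≠ K' → Disjoint K K') ∧
      (∀ K ∈ P, (K.card = 2 ∨ K.card = 3) ∧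
        ∀ j ∈ K, ∀ j' ∈ K, j ≠ j' → c j ≠ c j') ∧
      (P.filter fun K => K.card = 3).card ≤ 1 ∧
      ((∃ K ∈ P, K.card = 3) → Odd S.card) := by
  obtain ⟨P, hP⟩ := IsColorBalanced.exists_isCapletDecomposition hcap hS
  exact ⟨P, hP.biUnion_eq, hP.disjoint,
    fun K hK => ⟨hP.card_eq_two_or_three K hK, hP.colors_ne K hK⟩,
    hP.card_filter_card_eq_three_le_one, hP.odd_card_of_exists_card_eq_three⟩
end

section
/- Let D be a finite set of points in a metric space, each point assigned a color, and let λ* ≥ 0. Suppose there exists a (1/2)-capped clustering of D of radius λ*, i.e., a set F* ⊆ D and an assignment σ* : D → F* with d(j, σ*(j)) ≤ λ* for all j ∈ D and, for every i ∈ F* and color c₀, at most half of the points assigned to i have color c₀. Let G(2λ*) be the graph on vertex set D with an edge between j and j' if and only if c(j) ≠ c(j') and d(j, j') ≤ 2λ*. Then every connected component C of G(2λ*) admits a caplet decomposition κ(C) such that every caplet K ∈ κ(C) has diameter at most 10λ*, i.e., max_{j,j' ∈ K} d(j,j') ≤ 10λ*. -/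
/-!
A set in which no color holds more than half of the points splits into rainbow pairs when its
size is even, and into rainbow pairs and one rainbow triangle when it is odd: take out a point of
a most frequent color together with a point of a most frequent other color, and repeat. This
settles a single cluster, whose points lie within `λ` of its center.

A component of `G(2λ)` is a union of clusters (inside a capped cluster every point has a
differently colored neighbour), and the centers of these clusters span a tree whose edges have
length at most `λ + 2λ + λ = 4λ`. The tree is built by grafting subtrees onto the root one at a
time, and a union of clusters around the root center `r` is kept *flexible*: when its size is odd,
for every color `f` it can give away a point within `λ` of `r` not of color `f` and pair up the
rest; when its size is even, it can be paired up, and it can also take in any outside point within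
`5λ` of `r` not of color `f` in exchange for a point within `λ` of `r` not of color `f`. Grafting
a subtree with center `t`, `dist r t ≤ 4λ`, keeps this: two odd parts pair their given-away points
(at distance `≤ 6λ`), an even root part takes in the point given away by an odd subtree (it lies
within `λ + 4λ` of `r`), and a point taken in by two odd parts is paired with the point given away
by the subtree (at distance `≤ 5λ + 4λ + λ = 10λ`). An odd union takes its triangle from its
odd part.
-/

open scoped Classical

open Finset

namespace CapletDecomposition

variable {X C : Type*}

section Capped

variable [DecidableEq C] {c : X → C} {A : Finset X}

def IsCapped (c : X → C) (A : Finset X) : Prop :=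
  ∀ e, 2 * #{x ∈ A | c x = e} ≤ #A

lemma sum_card_filter_le (c : X → C) (A : Finset X) (T : Finset C) :
    ∑ e ∈ T, #{x ∈ A | c x = e} ≤ #A :=
  (sum_card_fiberwise_eq_card_filter A T c).trans_le (card_filter_le _ _)

namespace IsCapped

lemma exists_ne (h : IsCapped c A) (hA : A.Nonempty) (f : C) : ∃ z ∈ A, c z ≠ f := by
  by_contra! hall
  have := h f
  rw [filter_true_of_mem hall] at this
  have := hA.card_pos
  omega

lemma two_le_card (h : IsCapped c A) (hA : A.Nonempty) : 2 ≤ #A := by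
  obtain ⟨x, hx⟩ := hA
  obtain ⟨y, hy, hyx⟩ := h.exists_ne ⟨x, hx⟩ (c x)
  exact one_lt_card.2 ⟨x, hx, y, hy, fun h => hyx (h ▸ rfl)⟩

lemma reachable {G : SimpleGraph X} (h : IsCapped c A)
    (hadj : ∀ x ∈ A, ∀ y ∈ A, c x ≠ c y → G.Adj x y) {x y : X} (hx : x ∈ A) (hy : y ∈ A) :
    G.Reachable x y := by
  by_cases hxy : c x = c y
  · obtain ⟨w, hw, hwx⟩ := h.exists_ne ⟨x, hx⟩ (c x)
    exact (hadj x hx w hw (Ne.symm hwx)).reachable.trans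
      (hadj w hw y hy (hxy ▸ hwx)).reachable
  · exact (hadj x hx y hy hxy).reachable

end IsCapped

variable [DecidableEq X] {p z : X}

lemma card_filter_erase_add (c : X → C) (hz : z ∈ A) (e : C) :
    #{x ∈ A.erase z | c x = e} + (if c z = e then 1 else 0) = #{x ∈ A | c x = e} := by
  simp only [card_filter]
  exact sum_erase_add _ _ hz

lemma card_filter_insert (c : X → C) (hp : p ∉ A) (e : C) :
    #{x ∈ insert p A | c x = e} = #{x ∈ A | c x = e} + if c p = e then 1 else 0 := by
  simp only [card_filter]
  rw [sum_insert hp, add_comm]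

namespace IsCapped

lemma erase (h : IsCapped c A) (hodd : Odd #A) (hz : z ∈ A) : IsCapped c (A.erase z) := by
  intro e
  have := h e
  have := card_filter_erase_add c hz e
  rw [card_erase_of_mem hz]
  obtain ⟨k, hk⟩ := hodd
  split_ifs at * <;> omega

/-- If `c p` fills half of `A`, the point `z` traded for `p` must have the same color. -/
lemma exists_insert_erase (h : IsCapped c A) (heven : Even #A) (hA : A.Nonempty)
    (hp : p ∉ A) {f : C} (hpf : c p ≠ f) :
    ∃ z ∈ A, c z ≠ f ∧ IsCapped c ((insert p A).erase z) := by
  have key : ∀ z ∈ A, (2 * #{x ∈ A | c x = c p} = #A → c z = c p) →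
      IsCapped c ((insert p A).erase z) := by
    intro z hz hsat e
    have hz' : z ∈ insert p A := mem_insert_of_mem hz
    have h1 := card_filter_erase_add c hz' e
    have h2 := card_filter_insert c hp e
    have h3 := h e
    rw [card_erase_of_mem hz', card_insert_of_notMem hp]
    obtain ⟨k, hk⟩ := heven
    by_cases hpe : c p = e
    · subst hpe
      rw [if_pos rfl] at h2
      by_cases hze : c z = c p
      · rw [if_pos hze] at h1; omega
      · rw [if_neg hze] at h1; have := mt hsat hze; omega
    · rw [if_neg hpe] at h2
      split_ifs at h1 <;> omega
  by_cases hs : 2 * #{x ∈ A | c x = c p} = #A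
  · obtain ⟨z, hz⟩ : {x ∈ A | c x = c p}.Nonempty := by
      rw [← card_pos]; have := hA.card_pos; omega
    rw [mem_filter] at hz
    exact ⟨z, hz.1, hz.2 ▸ hpf, key z hz.1 fun _ => hz.2⟩
  · obtain ⟨z, hz, hzf⟩ := h.exists_ne hA f
    exact ⟨z, hz, hzf, key z hz fun h => absurd h hs⟩

lemma exists_erase_erase (h : IsCapped c A) (h2 : 2 ≤ #A) (h3 : #A ≠ 3) :
    ∃ u ∈ A, ∃ v ∈ A, c u ≠ c v ∧ IsCapped c ((A.erase u).erase v) := by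
  set n : C → ℕ := fun e => #{x ∈ A | c x = e}
  obtain ⟨u, hu, humax⟩ := A.exists_max_image (n ∘ c) (card_pos.1 (by omega))
  obtain ⟨v, hv, hvmax⟩ := {x ∈ A | c x ≠ c u}.exists_max_image (n ∘ c) (by
    obtain ⟨w, hw, hwu⟩ := h.exists_ne (card_pos.1 (by omega)) (c u)
    exact ⟨w, mem_filter.2 ⟨hw, hwu⟩⟩)
  rw [mem_filter] at hv
  refine ⟨u, hu, v, hv.1, Ne.symm hv.2, fun e => ?_⟩
  have hv' : v ∈ A.erase u := mem_erase.2 ⟨fun h => hv.2 (h ▸ rfl), hv.1⟩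
  have h1 := card_filter_erase_add c hu e
  have h2 := card_filter_erase_add c hv' e
  have hce := h e
  rw [card_erase_of_mem hv', card_erase_of_mem hu]
  by_cases hue : c u = e
  · rw [if_pos hue] at h1
    rw [if_neg (fun hve => hv.2 (hve.trans hue.symm))] at h2
    omega
  rw [if_neg hue] at h1
  by_cases hve : c v = e
  · rw [if_pos hve] at h2; omega
  rw [if_neg hve] at h2
  -- a third color occurring in `A` is at most as frequent as `c u` and `c v`
  obtain ⟨w, hw⟩ | hzero := (filter (fun x => c x = e) A).eq_empty_or_nonempty.symm
  · rw [mem_filter] at hw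
    have hwu : n e ≤ n (c u) := hw.2 ▸ humax w hw.1
    have hwv : n e ≤ n (c v) := hw.2 ▸ hvmax w (mem_filter.2 ⟨hw.1, hw.2 ▸ Ne.symm hue⟩)
    have hsum := sum_card_filter_le c A {c u, c v, e}
    rw [sum_insert (by simp [hv.2.symm, hue]), sum_insert (by simp [hve]),
      sum_singleton] at hsum
    simp only [n] at hwu hwv
    omega
  · rw [hzero, card_empty] at h1
    omega

lemma injOn_of_card_eq_three (h : IsCapped c A) (h3 : #A = 3) : Set.InjOn c A := by
  intro x hx y hy hxy
  by_contra hne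
  have hsub : {x, y} ⊆ {w ∈ A | c w = c x} := by
    intro w hw
    rcases mem_insert.1 hw with rfl | hw
    · exact mem_filter.2 ⟨hx, rfl⟩
    · rw [mem_singleton.1 hw]; exact mem_filter.2 ⟨hy, hxy.symm⟩
  have := card_le_card hsub
  rw [card_pair hne] at this
  have := h (c x)
  omega

end IsCapped

end Capped

section Partition

variable [DecidableEq X]

def IsPartition (good : Finset X → Prop) (A : Finset X) (P : Finset (Finset X)) : Prop :=
  P.biUnion id = A ∧ (P : Set (Finset X)).PairwiseDisjoint id ∧ ∀ K ∈ P, good K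

namespace IsPartition

variable {good good' : Finset X → Prop} {A B K : Finset X} {P P' : Finset (Finset X)}

lemma empty : IsPartition good ∅ ∅ := ⟨rfl, by simp, by simp⟩

lemma singleton (h : good K) : IsPartition good K {K} := ⟨by simp, by simp, by simpa⟩

lemma subset (h : IsPartition good A P) (hK : K ∈ P) : K ⊆ A :=
  h.1 ▸ subset_biUnion_of_mem id hK

lemma union (hA : IsPartition good A P) (hB : IsPartition good B P') (hAB : Disjoint A B) :
    IsPartition good (A ∪ B) (P ∪ P') := by
  refine ⟨by rw [union_biUnion, hA.1, hB.1], ?_, fun K hK => ?_⟩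
  · rw [coe_union]
    exact hA.2.1.union hB.2.1 fun K hK K' hK' _ =>
      hAB.mono (hA.subset hK) (hB.subset hK')
  · rcases mem_union.1 hK with hK | hK
    exacts [hA.2.2 K hK, hB.2.2 K hK]

lemma mono (h : IsPartition good A P) (hg : ∀ K, good K → good' K) : IsPartition good' A P :=
  ⟨h.1, h.2.1, fun K hK => hg K (h.2.2 K hK)⟩

end IsPartition

end Partition

section Caplets

variable [DecidableEq X] [PseudoMetricSpace X] (c : X → C) (δ : ℝ)

def IsEdgeCaplet (K : Finset X) : Prop :=
  ∃ x y, K = {x, y} ∧ c x ≠ c y ∧ dist x y ≤ δ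

def IsCaplet (K : Finset X) : Prop :=
  (#K = 2 ∨ #K = 3) ∧ (∀ j ∈ K, ∀ j' ∈ K, j ≠ j' → c j ≠ c j') ∧
    ∀ j ∈ K, ∀ j' ∈ K, dist j j' ≤ δ

def HasPairing (A : Finset X) : Prop :=
  ∃ P, IsPartition (IsEdgeCaplet c δ) A P

def HasTriangleSplit (A : Finset X) : Prop :=
  ∃ K ⊆ A, #K = 3 ∧ IsCaplet c δ K ∧ HasPairing c δ (A \ K)

variable {c δ} {A B K : Finset X} {u v : X}

lemma IsEdgeCaplet.card_eq_two (h : IsEdgeCaplet c δ K) : #K = 2 := by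
  obtain ⟨x, y, rfl, hxy, -⟩ := h
  exact card_pair fun h => hxy (h ▸ rfl)

lemma IsEdgeCaplet.isCaplet (h : IsEdgeCaplet c δ K) : IsCaplet c δ K := by
  refine ⟨Or.inl h.card_eq_two, ?_⟩
  obtain ⟨x, y, rfl, hxy, hd⟩ := h
  have hδ : 0 ≤ δ := dist_nonneg.trans hd
  simp only [mem_insert, mem_singleton]
  constructor
  · rintro j (rfl | rfl) j' (rfl | rfl) hne
    exacts [absurd rfl hne, hxy, hxy.symm, absurd rfl hne]
  · rintro j (rfl | rfl) j' (rfl | rfl)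
    exacts [(dist_self _).trans_le hδ, hd, by rwa [dist_comm], (dist_self _).trans_le hδ]

lemma HasPairing.empty : HasPairing c δ (∅ : Finset X) := ⟨∅, .empty⟩

lemma HasPairing.union (hA : HasPairing c δ A) (hB : HasPairing c δ B) (hAB : Disjoint A B) :
    HasPairing c δ (A ∪ B) :=
  let ⟨P, hP⟩ := hA
  let ⟨P', hP'⟩ := hB
  ⟨P ∪ P', hP.union hP' hAB⟩

lemma HasPairing.union_pair (h : HasPairing c δ A) (hu : u ∉ A) (hv : v ∉ A) (huv : c u ≠ c v)
    (hd : dist u v ≤ δ) : HasPairing c δ (A ∪ {u, v}) :=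
  h.union ⟨_, .singleton ⟨u, v, rfl, huv, hd⟩⟩ (by simp [hu, hv])

lemma HasTriangleSplit.union (hA : HasTriangleSplit c δ A) (hB : HasPairing c δ B)
    (hAB : Disjoint A B) : HasTriangleSplit c δ (A ∪ B) := by
  obtain ⟨K, hK, hK3, hKc, hP⟩ := hA
  refine ⟨K, hK.trans subset_union_left, hK3, hKc, ?_⟩
  rw [union_sdiff_distrib, sdiff_eq_self_of_disjoint (hAB.mono_left hK).symm]
  exact hP.union hB (hAB.mono_left sdiff_subset)

lemma HasPairing.exists_decomposition (h : HasPairing c δ A) :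
    ∃ P, IsPartition (IsCaplet c δ) A P ∧ #{K ∈ P | #K = 3} ≤ 1 := by
  obtain ⟨P, hP⟩ := h
  refine ⟨P, hP.mono fun _ => IsEdgeCaplet.isCaplet, ?_⟩
  rw [filter_false_of_mem fun K hK => by rw [(hP.2.2 K hK).card_eq_two]; decide, card_empty]
  exact zero_le_one

lemma HasTriangleSplit.exists_decomposition (h : HasTriangleSplit c δ A) :
    ∃ P, IsPartition (IsCaplet c δ) A P ∧ #{K ∈ P | #K = 3} ≤ 1 := by
  obtain ⟨K, hK, hK3, hKc, P, hP⟩ := h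
  refine ⟨{K} ∪ P, ?_, ?_⟩
  · rw [← union_sdiff_of_subset hK]
    exact (IsPartition.singleton hKc).union (hP.mono fun _ => IsEdgeCaplet.isCaplet)
      disjoint_sdiff
  · refine (card_le_card fun K' hK' => ?_).trans (card_singleton K).le
    obtain ⟨hK', h3⟩ := mem_filter.1 hK'
    rcases mem_union.1 hK' with hK' | hK'
    · exact hK'
    · have := (hP.2.2 K' hK').card_eq_two; omega

variable [DecidableEq C]

lemma IsCapped.hasPairing_and_hasTriangleSplit (h : IsCapped c A)
    (hdiam : ∀ x ∈ A, ∀ y ∈ A, dist x y ≤ δ) :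
    (Even #A → HasPairing c δ A) ∧ (Odd #A → HasTriangleSplit c δ A) := by
  induction hn : #A using Nat.strong_induction_on generalizing A with
  | _ n ih =>
    obtain rfl | hA := A.eq_empty_or_nonempty
    · exact ⟨fun _ => .empty, fun h => absurd h (by simp [← hn])⟩
    obtain h3 | h3 := eq_or_ne n 3
    · have hinj := h.injOn_of_card_eq_three (hn.trans h3)
      refine ⟨fun h => by grind, fun _ => ⟨A, subset_rfl, hn.trans h3, ⟨Or.inr (hn.trans h3),
        fun x hx y hy hxy hc => hxy (hinj hx hy hc), hdiam⟩, ?_⟩⟩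
      rw [sdiff_self]
      exact .empty
    have h2 := h.two_le_card hA
    obtain ⟨u, hu, v, hv, huv, hcap⟩ := h.exists_erase_erase h2 (hn ▸ h3)
    set A' := (A.erase u).erase v
    have hA'A : A' ⊆ A := (erase_subset _ _).trans (erase_subset _ _)
    have hv' : v ∈ A.erase u := mem_erase.2 ⟨fun h => huv (h ▸ rfl), hv⟩
    have hcard : #A' = n - 2 := by
      rw [card_erase_of_mem hv', card_erase_of_mem hu]; omega
    have hA : A = A' ∪ {u, v} := by
      ext x; simp only [A', mem_union, mem_erase, mem_insert, mem_singleton]; grind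
    have hpair : ∀ B ⊆ A', HasPairing c δ B → HasPairing c δ (B ∪ {u, v}) := fun B hB hP =>
      hP.union_pair (fun h => by simpa [A'] using hB h) (fun h => by simpa [A'] using hB h) huv
        (hdiam u hu v hv)
    obtain ⟨ihe, iho⟩ := ih (n - 2) (by omega) hcap
      (fun x hx y hy => hdiam x (hA'A hx) y (hA'A hy)) hcard
    refine ⟨fun he => hA ▸ hpair A' subset_rfl (ihe (by grind)), fun ho => ?_⟩
    obtain ⟨K, hK, hK3, hKc, hP⟩ := iho (by grind)
    refine ⟨K, hK.trans hA'A, hK3, hKc, ?_⟩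
    have hAK : A \ K = (A' \ K) ∪ {u, v} := by
      have := @hK
      ext x; simp only [A', mem_union, mem_sdiff, mem_erase, mem_insert, mem_singleton]; grind
    rw [hAK]
    exact hpair _ sdiff_subset hP

end Caplets

section Flexible

variable [DecidableEq X] [PseudoMetricSpace X] (c : X → C) (lam : ℝ)

def CanEmit (r : X) (A : Finset X) : Prop :=
  ∀ f, ∃ z ∈ A, dist z r ≤ lam ∧ c z ≠ f ∧ HasPairing c (10 * lam) (A.erase z)

def CanAbsorb (r : X) (A : Finset X) : Prop :=
  ∀ f p, p ∉ A → c p ≠ f → dist p r ≤ 5 * lam →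
    ∃ z ∈ A, dist z r ≤ lam ∧ c z ≠ f ∧ HasPairing c (10 * lam) ((insert p A).erase z)

def IsFlexibleAt (r : X) (A : Finset X) : Prop :=
  (Even #A → HasPairing c (10 * lam) A ∧ CanAbsorb c lam r A) ∧
    (Odd #A → CanEmit c lam r A ∧ HasTriangleSplit c (10 * lam) A)

variable {c lam} {A T R : Finset X} {r t : X}

lemma IsCapped.isFlexibleAt [DecidableEq C] (h : IsCapped c A) (hA : A.Nonempty)
    (hr : ∀ x ∈ A, dist x r ≤ lam) : IsFlexibleAt c lam r A := by
  have hlam : 0 ≤ lam := let ⟨x, hx⟩ := hA; dist_nonneg.trans (hr x hx)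
  have hdiam : ∀ {B : Finset X}, (∀ x ∈ B, dist x r ≤ 5 * lam) →
      ∀ x ∈ B, ∀ y ∈ B, dist x y ≤ 10 * lam := fun hB x hx y hy =>
    (dist_triangle_right x y r).trans (by linarith [hB x hx, hB y hy])
  have hA5 : ∀ x ∈ A, dist x r ≤ 5 * lam := fun x hx => (hr x hx).trans (by linarith)
  refine ⟨fun heven => ⟨(h.hasPairing_and_hasTriangleSplit (hdiam hA5)).1 heven, ?_⟩,
    fun hodd => ⟨?_, (h.hasPairing_and_hasTriangleSplit (hdiam hA5)).2 hodd⟩⟩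
  · intro f p hp hpf hpr
    obtain ⟨z, hz, hzf, hcap⟩ := h.exists_insert_erase heven hA hp hpf
    refine ⟨z, hz, hr z hz, hzf, (hcap.hasPairing_and_hasTriangleSplit (hdiam fun x hx => ?_)).1 ?_⟩
    · rcases mem_insert.1 (mem_of_mem_erase hx) with rfl | hx
      exacts [hpr, hA5 x hx]
    · rwa [card_erase_of_mem (mem_insert_of_mem hz), card_insert_of_notMem hp,
        Nat.add_sub_cancel]
  · intro f
    obtain ⟨z, hz, hzf⟩ := h.exists_ne hA f
    refine ⟨z, hz, hr z hz, hzf, ((h.erase hodd hz).hasPairing_and_hasTriangleSplit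
      (hdiam fun x hx => hA5 x (mem_of_mem_erase hx))).1 ?_⟩
    rw [card_erase_of_mem hz]
    exact Nat.Odd.sub_odd hodd odd_one

lemma CanAbsorb.union_left (hT : HasPairing c (10 * lam) T) (hR : CanAbsorb c lam r R)
    (hTR : Disjoint T R) : CanAbsorb c lam r (T ∪ R) := by
  intro f p hp hpf hpr
  obtain ⟨z, hz, hzr, hzf, hP⟩ := hR f p (fun h => hp (mem_union_right _ h)) hpf hpr
  refine ⟨z, mem_union_right _ hz, hzr, hzf, ?_⟩
  have hTR' := disjoint_left.1 hTR
  have hset : (insert p (T ∪ R)).erase z = T ∪ (insert p R).erase z := by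
    ext x; simp only [mem_erase, mem_insert, mem_union] at hp ⊢; grind
  rw [hset]
  refine hT.union hP (disjoint_left.2 fun x hxT hx => ?_)
  simp only [mem_erase, mem_insert] at hx
  grind

lemma CanEmit.hasPairing_union (hT : CanEmit c lam t T) (hR : CanEmit c lam r R)
    (hTR : Disjoint T R) (hrt : dist r t ≤ 4 * lam) : HasPairing c (10 * lam) (T ∪ R) := by
  obtain ⟨z', hz', hz't, -, hPT⟩ := hT (c t)
  obtain ⟨z, hz, hzr, hzf, hPR⟩ := hR (c z')
  have hTR' := disjoint_left.1 hTR
  have hset : T ∪ R = (T.erase z' ∪ R.erase z) ∪ {z', z} := by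
    ext x; simp only [mem_erase, mem_insert, mem_union, mem_singleton]; grind
  rw [hset]
  refine (hPT.union hPR (disjoint_left.2 fun x hx hx' => ?_)).union_pair ?_ ?_ (Ne.symm hzf) ?_
  · exact hTR' (mem_of_mem_erase hx) (mem_of_mem_erase hx')
  · simp only [mem_union, mem_erase]; grind
  · simp only [mem_union, mem_erase]; grind
  · have := dist_nonneg.trans hz't
    linarith [dist_triangle4 z' t r z, dist_comm t r, dist_comm r z]

lemma CanEmit.canAbsorb_union (hT : CanEmit c lam t T) (hR : CanEmit c lam r R)
    (hTR : Disjoint T R) (hrt : dist r t ≤ 4 * lam) : CanAbsorb c lam r (T ∪ R) := by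
  intro f p hp hpf hpr
  obtain ⟨z', hz', hz't, hz'p, hPT⟩ := hT (c p)
  obtain ⟨z, hz, hzr, hzf, hPR⟩ := hR f
  refine ⟨z, mem_union_right _ hz, hzr, hzf, ?_⟩
  have hTR' := disjoint_left.1 hTR
  simp only [mem_union, not_or] at hp
  have hset : (insert p (T ∪ R)).erase z = (T.erase z' ∪ R.erase z) ∪ {p, z'} := by
    ext x; simp only [mem_erase, mem_insert, mem_union, mem_singleton]; grind
  rw [hset]
  refine (hPT.union hPR (disjoint_left.2 fun x hx hx' => ?_)).union_pair ?_ ?_ (Ne.symm hz'p) ?_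
  · exact hTR' (mem_of_mem_erase hx) (mem_of_mem_erase hx')
  · simp only [mem_union, mem_erase]; grind
  · simp only [mem_union, mem_erase]; grind
  · linarith [dist_triangle4 p r t z', dist_comm t z']

lemma CanEmit.union_left (hT : HasPairing c (10 * lam) T) (hR : CanEmit c lam r R)
    (hTR : Disjoint T R) : CanEmit c lam r (T ∪ R) := by
  intro f
  obtain ⟨z, hz, hzr, hzf, hP⟩ := hR f
  refine ⟨z, mem_union_right _ hz, hzr, hzf, ?_⟩
  rw [erase_union_distrib, erase_eq_of_notMem (disjoint_right.1 hTR hz)]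
  exact hT.union hP (hTR.mono_right (erase_subset _ _))

lemma CanEmit.union_canAbsorb (hT : CanEmit c lam t T) (hR : CanAbsorb c lam r R)
    (hTR : Disjoint T R) (hrt : dist r t ≤ 4 * lam) : CanEmit c lam r (T ∪ R) := by
  intro f
  obtain ⟨z', hz', hz't, hz'f, hPT⟩ := hT f
  have hz'R : z' ∉ R := disjoint_left.1 hTR hz'
  obtain ⟨z, hz, hzr, hzf, hPR⟩ := hR f z' hz'R hz'f
    (by linarith [dist_triangle z' t r, dist_comm t r])
  refine ⟨z, mem_union_right _ hz, hzr, hzf, ?_⟩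
  have hTR' := disjoint_left.1 hTR
  have hset : (T ∪ R).erase z = T.erase z' ∪ (insert z' R).erase z := by
    ext x; simp only [mem_erase, mem_insert, mem_union]; grind
  rw [hset]
  refine hPT.union hPR (disjoint_left.2 fun x hx hx' => ?_)
  simp only [mem_erase, mem_insert] at hx hx'
  grind

lemma IsFlexibleAt.union (hT : IsFlexibleAt c lam t T) (hR : IsFlexibleAt c lam r R)
    (hTR : Disjoint T R) (hrt : dist r t ≤ 4 * lam) : IsFlexibleAt c lam r (T ∪ R) := by
  rw [IsFlexibleAt, card_union_of_disjoint hTR]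
  rcases Nat.even_or_odd #T with hTe | hTo <;> rcases Nat.even_or_odd #R with hRe | hRo
  · have hPT := (hT.1 hTe).1
    exact ⟨fun _ => ⟨hPT.union (hR.1 hRe).1 hTR, (hR.1 hRe).2.union_left hPT hTR⟩,
      fun h => absurd (hTe.add hRe) (Nat.not_even_iff_odd.2 h)⟩
  · have hPT := (hT.1 hTe).1
    refine ⟨fun h => absurd (hTe.add_odd hRo) (Nat.not_odd_iff_even.2 h),
      fun _ => ⟨(hR.2 hRo).1.union_left hPT hTR, ?_⟩⟩
    rw [union_comm]
    exact (hR.2 hRo).2.union hPT hTR.symm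
  · refine ⟨fun h => absurd (hTo.add_even hRe) (Nat.not_odd_iff_even.2 h),
      fun _ => ⟨(hT.2 hTo).1.union_canAbsorb (hR.1 hRe).2 hTR hrt,
        (hT.2 hTo).2.union (hR.1 hRe).1 hTR⟩⟩
  · exact ⟨fun _ => ⟨(hT.2 hTo).1.hasPairing_union (hR.2 hRo).1 hTR hrt,
      (hT.2 hTo).1.canAbsorb_union (hR.2 hRo).1 hTR hrt⟩,
      fun h => absurd (hTo.add_odd hRo) (Nat.not_even_iff_odd.2 h)⟩

end Flexible

section RootedTree

variable {α : Type*} [DecidableEq α]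

/-- A spanning tree of `S` rooted at `r` with edges in `adj`, presented by grafting: `join`
hangs a tree rooted at `t` below the root `r` of another one, where `adj r t`. -/
inductive IsRootedTree (adj : α → α → Prop) : Finset α → α → Prop
  | singleton (r : α) : IsRootedTree adj {r} r
  | join {T R : Finset α} {t r : α} : IsRootedTree adj T t → IsRootedTree adj R r →
      Disjoint T R → adj r t → IsRootedTree adj (T ∪ R) r

namespace IsRootedTree

variable {adj : α → α → Prop} {S R : Finset α} {s r u : α}

lemma root_mem (h : IsRootedTree adj S r) : r ∈ S := by
  induction h with
  | singleton r => exact mem_singleton_self r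
  | join _ _ _ _ _ ih => exact mem_union_right _ ih

lemma graft (hS : IsRootedTree adj S s) (hR : IsRootedTree adj R r) (hSR : Disjoint S R)
    (hu : u ∈ S) (hur : adj u r) : IsRootedTree adj (S ∪ R) s := by
  induction hS generalizing u with
  | singleton s =>
    rw [mem_singleton.1 hu] at hur
    rw [union_comm]
    exact .join hR (.singleton s) hSR.symm hur
  | join hT hR' hTR' hst ihT ihR' =>
    rw [disjoint_union_left] at hSR
    rcases mem_union.1 hu with hu | hu
    · rw [union_right_comm]
      exact (ihT hSR.1 hu hur).join hR' (disjoint_union_left.2 ⟨hTR', hSR.2.symm⟩) hst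
    · rw [union_assoc]
      exact hT.join (ihR' hSR.2 hu hur) (disjoint_union_right.2 ⟨hTR', hSR.1⟩) hst

end IsRootedTree

lemma isRootedTree_image {G : SimpleGraph X} {adj : α → α → Prop} (σ : X → α) {W : Finset X}
    {j₀ : X} (hj₀ : j₀ ∈ W) (hW : ∀ x ∈ W, G.Reachable j₀ x)
    (hclosed : ∀ x ∈ W, ∀ y, G.Adj x y → y ∈ W) (hadj : ∀ x y, G.Adj x y → adj (σ x) (σ y)) :
    IsRootedTree adj (W.image σ) (σ j₀) := by
  -- A maximal rooted subtree is everything: a walk from `j₀` leaving it has an edge to graft on.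
  obtain ⟨M, hM⟩ := Finset.exists_maximal
    (s := (W.image σ).powerset.filter (IsRootedTree adj · (σ j₀)))
    ⟨{σ j₀}, mem_filter.2 ⟨by simpa using mem_image_of_mem σ hj₀, .singleton _⟩⟩
  obtain ⟨hMW, hMtree⟩ := mem_filter.1 hM.prop
  rw [mem_powerset] at hMW
  suffices W.image σ ⊆ M by rwa [hMW.antisymm this] at hMtree
  intro i hi
  obtain ⟨x, hx, rfl⟩ := mem_image.1 hi
  by_contra hxM
  obtain ⟨p⟩ := hW x hx
  obtain ⟨d, -, ⟨haW, haM⟩, hb⟩ := p.exists_boundary_dart {v | v ∈ W ∧ σ v ∈ M}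
    ⟨hj₀, hMtree.root_mem⟩ fun h => hxM h.2
  have hbW := hclosed _ haW _ d.adj
  have hbM : σ d.snd ∉ M := fun h => hb ⟨hbW, h⟩
  have hmax := hM.2 (y := M ∪ {σ d.snd}) (mem_filter.2 ⟨mem_powerset.2
    (union_subset hMW (singleton_subset_iff.2 (mem_image_of_mem σ hbW))),
    hMtree.graft (.singleton _) (disjoint_singleton_right.2 hbM) haM (hadj _ _ d.adj)⟩)
    subset_union_left
  exact hbM (hmax (mem_union_right _ (mem_singleton_self _)))

end RootedTree

section Clustering

lemma biUnion_image_fiber_filter_reachable [DecidableEq X] {α : Type*} [DecidableEq α] {G : SimpleGraph X} (D : Finset X)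
    (σ : X → α) (j₀ : X) (hfiber : ∀ x ∈ D, ∀ y ∈ D, σ x = σ y → G.Reachable x y) :
    ({j ∈ D | G.Reachable j₀ j}.image σ).biUnion (fun i => {j ∈ D | σ j = i}) =
      {j ∈ D | G.Reachable j₀ j} := by
  ext y
  simp only [mem_biUnion, mem_image, mem_filter]
  constructor
  · rintro ⟨_, ⟨x, ⟨hxD, hx⟩, rfl⟩, hyD, hxy⟩
    exact ⟨hyD, hx.trans (hfiber x hxD y hyD hxy.symm)⟩
  · rintro ⟨hyD, hy⟩
    exact ⟨σ y, ⟨y, ⟨hyD, hy⟩, rfl⟩, hyD, rfl⟩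

variable [DecidableEq C] [PseudoMetricSpace X]

/-- A `1/2`-capped clustering of radius `lam` whose clusters `Q i` are indexed by their centers. -/
structure IsCappedClustering (c : X → C) (lam : ℝ) (Q : X → Finset X) : Prop where
  isCapped : ∀ i, IsCapped c (Q i)
  dist_le : ∀ i, ∀ x ∈ Q i, dist x i ≤ lam
  pairwiseDisjoint : Pairwise fun i j => Disjoint (Q i) (Q j)

variable [DecidableEq X] {c : X → C} {lam : ℝ}

lemma isCappedClustering_fiber {D Fs : Finset X} {σ : X → X} (hσ : ∀ j ∈ D, σ j ∈ Fs)
    (hdist : ∀ j ∈ D, dist j (σ j) ≤ lam)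
    (hcap : ∀ i ∈ Fs, ∀ e : C,
      (#{j ∈ D | σ j = i ∧ c j = e} : ℝ) ≤ (1 / 2 : ℝ) * (#{j ∈ D | σ j = i} : ℝ)) :
    IsCappedClustering c lam fun i => {j ∈ D | σ j = i} where
  isCapped i e := by
    rw [filter_filter]
    by_cases hi : i ∈ Fs
    · have := hcap i hi e
      exact_mod_cast (by linarith : (2 * #{j ∈ D | σ j = i ∧ c j = e} : ℝ) ≤ #{j ∈ D | σ j = i})
    · rw [filter_false_of_mem fun j hj (hji : σ j = i ∧ c j = e) => hi (hji.1 ▸ hσ j hj)]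
      simp
  dist_le i x hx := by
    obtain ⟨hxD, rfl⟩ := mem_filter.1 hx
    exact hdist x hxD
  pairwiseDisjoint i j hij := disjoint_filter.2 fun x _ hi hj => hij (hi.symm.trans hj)

theorem IsRootedTree.isFlexibleAt_biUnion {Q : X → Finset X} {S : Finset X} {r : X}
    (hQ : IsCappedClustering c lam Q) (hS : IsRootedTree (fun i j => dist i j ≤ 4 * lam) S r)
    (hne : ∀ i ∈ S, (Q i).Nonempty) : IsFlexibleAt c lam r (S.biUnion Q) := by
  induction hS with
  | singleton r =>
    rw [singleton_biUnion]
    exact (hQ.isCapped r).isFlexibleAt (hne r (mem_singleton_self r)) (hQ.dist_le r)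
  | join _ _ hTR hrt ihT ihR =>
    rw [union_biUnion]
    refine (ihT fun i hi => hne i (mem_union_left _ hi)).union
      (ihR fun i hi => hne i (mem_union_right _ hi)) ?_ hrt
    exact (disjoint_biUnion_left _ _ _).2 fun i hi => (disjoint_biUnion_right _ _ _).2 fun j hj =>
      hQ.pairwiseDisjoint fun hij => disjoint_left.1 hTR hi (hij ▸ hj)

end Clustering

end CapletDecomposition

open CapletDecomposition Finset in
theorem stmt_10_general {X C : Type*} [MetricSpace X] [DecidableEq X] [DecidableEq C]
    (D : Finset X) (c : X → C) (lam : ℝ)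
    (h : ∃ (Fs : Finset X) (σ : X → X), Fs ⊆ D ∧
      (∀ j ∈ D, σ j ∈ Fs) ∧ (∀ j ∈ D, dist j (σ j) ≤ lam) ∧
      ∀ i ∈ Fs, ∀ c₀ : C,
        ((D.filter fun j => σ j = i ∧ c j = c₀).card : ℝ) ≤
          (1 / 2 : ℝ) * ((D.filter fun j => σ j = i).card : ℝ))
    (G : SimpleGraph X)
    (hG : ∀ j j', G.Adj j j' ↔ (j ∈ D ∧ j' ∈ D ∧ c j ≠ c j' ∧ dist j j' ≤ 2 * lam))
    (j₀ : X) (hj₀ : j₀ ∈ D) :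
    ∃ P : Finset (Finset X),
      P.biUnion id = (D.filter fun j => G.Reachable j₀ j) ∧
      (∀ K ∈ P, ∀ K' ∈ P, K ≠ K' → Disjoint K K') ∧
      (∀ K ∈ P, (K.card = 2 ∨ K.card = 3) ∧
        (∀ j ∈ K, ∀ j' ∈ K, j ≠ j' → c j ≠ c j') ∧
        (∀ j ∈ K, ∀ j' ∈ K, dist j j' ≤ 10 * lam)) ∧
      (P.filter fun K => K.card = 3).card ≤ 1 := by
  obtain ⟨Fs, σ, -, hσFs, hσ, hcap⟩ := h
  have hQ := isCappedClustering_fiber (c := c) hσFs hσ hcap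
  have hfiber : ∀ x ∈ D, ∀ y ∈ D, σ x = σ y → G.Reachable x y := by
    intro x hx y hy hxy
    refine (hQ.isCapped (σ x)).reachable (fun u hu v hv huv => (hG u v).2
      ⟨(mem_filter.1 hu).1, (mem_filter.1 hv).1, huv, ?_⟩)
      (mem_filter.2 ⟨hx, rfl⟩) (mem_filter.2 ⟨hy, hxy.symm⟩)
    linarith [dist_triangle_right u v (σ x), hQ.dist_le _ u hu, hQ.dist_le _ v hv]
  have htree : IsRootedTree (fun i j => dist i j ≤ 4 * lam)
      ({j ∈ D | G.Reachable j₀ j}.image σ) (σ j₀) := by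
    refine isRootedTree_image σ (mem_filter.2 ⟨hj₀, .rfl⟩) (fun x hx => (mem_filter.1 hx).2)
      (fun x hx y hxy => mem_filter.2 ⟨((hG x y).1 hxy).2.1,
        (mem_filter.1 hx).2.trans hxy.reachable⟩) fun x y hxy => ?_
    obtain ⟨hx, hy, -, hd⟩ := (hG x y).1 hxy
    linarith [dist_triangle4 (σ x) x y (σ y), dist_comm x (σ x), hσ x hx, hσ y hy]
  have hflex := htree.isFlexibleAt_biUnion hQ (by
    simp only [mem_image]
    rintro _ ⟨x, hx, rfl⟩
    exact ⟨x, mem_filter.2 ⟨(mem_filter.1 hx).1, rfl⟩⟩)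
  rw [biUnion_image_fiber_filter_reachable D σ j₀ hfiber] at hflex
  obtain ⟨P, hP, h3⟩ := (Nat.even_or_odd _).elim (fun he => (hflex.1 he).1.exists_decomposition)
    fun ho => (hflex.2 ho).2.exists_decomposition
  exact ⟨P, hP.1, fun K hK K' hK' hne => hP.2.1 hK hK' hne, hP.2.2, h3⟩

/-- If a `(1/2)`-capped clustering of `D` of radius `λ*` exists, then every
connected component of the threshold graph `G(2λ*)` admits a caplet decomposition in which
every caplet has diameter at most `10λ*`. The connected component of `j₀ ∈ D` is the set of
points of `D` reachable from `j₀` in the threshold graph. -/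
theorem stmt_10 {X C : Type*} [MetricSpace X] [DecidableEq X] [DecidableEq C]
    (D : Finset X) (c : X → C) (lam : ℝ) (hlam : 0 ≤ lam)
    (h : ∃ (Fs : Finset X) (σ : X → X), Fs ⊆ D ∧
      (∀ j ∈ D, σ j ∈ Fs) ∧ (∀ j ∈ D, dist j (σ j) ≤ lam) ∧
      ∀ i ∈ Fs, ∀ c₀ : C,
        ((D.filter fun j => σ j = i ∧ c j = c₀).card : ℝ) ≤
          (1 / 2 : ℝ) * ((D.filter fun j => σ j = i).card : ℝ))
    (G : SimpleGraph X)
    (hG : ∀ j j', G.Adj j j' ↔ (j ∈ D ∧ j' ∈ D ∧ c j ≠ c j' ∧ dist j j' ≤ 2 * lam))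
    (j₀ : X) (hj₀ : j₀ ∈ D) :
    ∃ P : Finset (Finset X),
      P.biUnion id = (D.filter fun j => G.Reachable j₀ j) ∧
      (∀ K ∈ P, ∀ K' ∈ P, K ≠ K' → Disjoint K K') ∧
      (∀ K ∈ P, (K.card = 2 ∨ K.card = 3) ∧
        (∀ j ∈ K, ∀ j' ∈ K, j ≠ j' → c j ≠ c j') ∧
        (∀ j ∈ K, ∀ j' ∈ K, dist j j' ≤ 10 * lam)) ∧
      (P.filter fun K => K.card = 3).card ≤ 1 :=
  stmt_10_general D c lam h G hG j₀ hj₀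
end

section
/- Let λ ≥ 0 and let K₀, K₁, …, K_ℓ (ℓ ≥ 1) be pairwise disjoint finite sets of colored points in a metric space such that: K₀ and K_ℓ each have exactly 3 points with pairwise distinct colors; each Kᵣ for 1 ≤ r ≤ ℓ−1 has exactly 2 points with distinct colors; each Kᵣ has diameter at most 2λ; and for each 0 ≤ r < ℓ, the minimum distance between a point of Kᵣ and a point of K_{r+1} is at most 6λ. Then the union K₀ ∪ K₁ ∪ … ∪ K_ℓ can be partitioned into ℓ + 2 sets, each consisting of exactly 2 points of distinct colors and each of diameter at most 10λ. -/
/-!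
Pick a point `a` of `K₀` within `6λ` of `K₁`, pair off the other two points of `K₀`, and carry
`a` along the path. Whenever `a` lies within `8λ` of the next caplet `Kᵣ`, it is within `10λ` of
all of `Kᵣ`, and since `Kᵣ` is rainbow one of its points has a colour different from `a`'s; pair
`a` with it. If `Kᵣ` is an edge caplet, its other point is within `2λ + 6λ = 8λ` of `Kᵣ₊₁` and is
carried on; at the triangle `K_ℓ` the two points left over form the last pair.
-/

open Finset

section

variable {X C : Type*} {c : X → C}

theorem exists_mem_color_ne {A : Finset X} (hA : 2 ≤ A.card)
    (hcol : ∀ j ∈ A, ∀ j' ∈ A, j ≠ j' → c j ≠ c j') (κ : C) : ∃ b ∈ A, c b ≠ κ := by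
  obtain ⟨x, hx, y, hy, hxy⟩ := one_lt_card.mp hA
  by_cases hcx : c x = κ
  · exact ⟨y, hy, fun hcy => hcol x hx y hy hxy (hcx.trans hcy.symm)⟩
  · exact ⟨x, hx, hcx⟩

variable [MetricSpace X]

variable (c) in
def IsEdgeCaplet (δ : ℝ) (A : Finset X) : Prop :=
  A.card = 2 ∧ (∀ j ∈ A, ∀ j' ∈ A, j ≠ j' → c j ≠ c j') ∧ ∀ j ∈ A, ∀ j' ∈ A, dist j j' ≤ δ

theorem IsEdgeCaplet.mono {δ δ' : ℝ} {A : Finset X} (hA : IsEdgeCaplet c δ A) (hδ : δ ≤ δ') :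
    IsEdgeCaplet c δ' A :=
  ⟨hA.1, hA.2.1, fun j hj j' hj' => (hA.2.2 j hj j' hj').trans hδ⟩

variable [DecidableEq X]

variable (c) in
def IsEdgeCapletPartition (δ : ℝ) (P : Finset (Finset X)) (S : Finset X) : Prop :=
  P.biUnion id = S ∧ (∀ A ∈ P, ∀ B ∈ P, A ≠ B → Disjoint A B) ∧ ∀ A ∈ P, IsEdgeCaplet c δ A

theorem isEdgeCaplet_pair {δ : ℝ} {a b : X} (hab : a ≠ b) (hc : c a ≠ c b)
    (hd : dist a b ≤ δ) : IsEdgeCaplet c δ {a, b} := by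
  have hδ : 0 ≤ δ := dist_nonneg.trans hd
  refine ⟨card_pair hab, ?_, ?_⟩ <;> simp only [mem_insert, mem_singleton]
  · rintro j (hj | hj) j' (hj' | hj') hne <;> subst j j' <;>
      first | exact absurd rfl hne | exact hc | exact hc.symm
  · rintro j (hj | hj) j' (hj' | hj') <;> subst j j' <;>
      simp only [dist_self, hδ, hd, dist_comm b a]

theorem isEdgeCaplet_erase {δ : ℝ} {T : Finset X} (hT : T.card = 3)
    (hcol : ∀ j ∈ T, ∀ j' ∈ T, j ≠ j' → c j ≠ c j') (hdiam : ∀ j ∈ T, ∀ j' ∈ T, dist j j' ≤ δ)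
    {x : X} (hx : x ∈ T) : IsEdgeCaplet c δ (T.erase x) :=
  ⟨by rw [card_erase_of_mem hx, hT],
    fun j hj j' hj' => hcol j (mem_of_mem_erase hj) j' (mem_of_mem_erase hj'),
    fun j hj j' hj' => hdiam j (mem_of_mem_erase hj) j' (mem_of_mem_erase hj')⟩

theorem exists_isEdgeCaplet_pair {ε δ : ℝ} {A : Finset X} {a : X} (ha : a ∉ A)
    (hA : 2 ≤ A.card) (hcol : ∀ j ∈ A, ∀ j' ∈ A, j ≠ j' → c j ≠ c j')
    (hdiam : ∀ j ∈ A, ∀ j' ∈ A, dist j j' ≤ δ) (hnear : ∃ j ∈ A, dist a j ≤ ε) :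
    ∃ b ∈ A, IsEdgeCaplet c (ε + δ) {a, b} := by
  obtain ⟨j, hj, haj⟩ := hnear
  obtain ⟨b, hb, hcb⟩ := exists_mem_color_ne hA hcol (c a)
  refine ⟨b, hb, isEdgeCaplet_pair (ne_of_mem_of_not_mem hb ha).symm (Ne.symm hcb) ?_⟩
  linarith [dist_triangle a j b, hdiam j hj b hb]

theorem isEdgeCapletPartition_singleton {δ : ℝ} {A : Finset X} (hA : IsEdgeCaplet c δ A) :
    IsEdgeCapletPartition c δ {A} A :=
  ⟨by simp, by simp, by simpa using hA⟩

theorem IsEdgeCapletPartition.insert {δ : ℝ} {P : Finset (Finset X)} {S A : Finset X}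
    (hP : IsEdgeCapletPartition c δ P S) (hA : IsEdgeCaplet c δ A) (hAS : Disjoint A S) :
    IsEdgeCapletPartition c δ (insert A P) (A ∪ S) ∧ (insert A P).card = P.card + 1 := by
  obtain ⟨hunion, hdisj, hcap⟩ := hP
  have hAB : ∀ B ∈ P, Disjoint A B := fun B hB =>
    hAS.mono_right (hunion ▸ subset_biUnion_of_mem id hB)
  have hAP : A ∉ P := fun hAP => by
    obtain ⟨x, hx⟩ := card_pos.mp (by rw [hA.1]; omega : 0 < A.card)
    exact disjoint_left.mp (hAB A hAP) hx hx
  refine ⟨⟨by rw [biUnion_insert, hunion]; rfl, ?_, (forall_mem_insert _ _ _).mpr ⟨hA, hcap⟩⟩,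
    card_insert_of_notMem hAP⟩
  simp only [mem_insert]
  rintro B (rfl | hB) D (rfl | hD) hne
  · exact absurd rfl hne
  · exact hAB D hD
  · exact (hAB B hB).symm
  · exact hdisj B hB D hD hne

theorem exists_isEdgeCapletPartition_insert_biUnion_Icc {lam : ℝ} (hlam : 0 ≤ lam) {ℓ m : ℕ}
    (hm : m ≤ ℓ) {K : ℕ → Finset X}
    (hdisj : ∀ r ≤ ℓ, ∀ s ≤ ℓ, r ≠ s → Disjoint (K r) (K s))
    (hlast : (K ℓ).card = 3) (hmid : ∀ r, m ≤ r → r < ℓ → (K r).card = 2)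
    (hcol : ∀ r ≤ ℓ, ∀ j ∈ K r, ∀ j' ∈ K r, j ≠ j' → c j ≠ c j')
    (hdiam : ∀ r ≤ ℓ, ∀ j ∈ K r, ∀ j' ∈ K r, dist j j' ≤ 2 * lam)
    (hconsec : ∀ r < ℓ, ∃ j ∈ K r, ∃ j' ∈ K (r + 1), dist j j' ≤ 6 * lam)
    {a : X} (ha : ∀ r ∈ Icc m ℓ, a ∉ K r) (hnear : ∃ j ∈ K m, dist a j ≤ 8 * lam) :
    ∃ P, P.card = ℓ - m + 2 ∧
      IsEdgeCapletPartition c (10 * lam) P (insert a ((Icc m ℓ).biUnion K)) := by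
  induction hm using Nat.decreasingInduction generalizing a with
  | self =>
    obtain ⟨b, hb, hab⟩ := exists_isEdgeCaplet_pair (ha ℓ (by simp)) (by omega) (hcol ℓ le_rfl)
      (hdiam ℓ le_rfl) hnear
    have hrest : IsEdgeCaplet c (10 * lam) ((K ℓ).erase b) :=
      (isEdgeCaplet_erase hlast (hcol ℓ le_rfl) (hdiam ℓ le_rfl) hb).mono (by linarith)
    obtain ⟨hP, hcard⟩ := (isEdgeCapletPartition_singleton hrest).insert
      (hab.mono (by linarith)) (by simp [ha ℓ (by simp)])
    refine ⟨_, by rw [hcard, card_singleton]; omega, ?_⟩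
    rw [Icc_self, singleton_biUnion]
    rwa [insert_union, singleton_union, insert_erase hb] at hP
  | of_succ m hm ih =>
    have hKm := hmid m le_rfl hm
    have hmIcc : m ∈ Icc m ℓ := by simp [hm.le]
    obtain ⟨b, hb, hab⟩ := exists_isEdgeCaplet_pair (ha m hmIcc) (by omega)
      (hcol m hm.le) (hdiam m hm.le) hnear
    obtain ⟨a', hrest⟩ :=
      card_eq_one.mp (by rw [card_erase_of_mem hb, hKm] : ((K m).erase b).card = 1)
    have hKm' : K m = {b, a'} := by rw [← insert_erase hb, hrest]
    have ha'm : a' ∈ K m := by simp [hKm']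
    have hba' : b ≠ a' := (ne_of_mem_erase (hrest ▸ mem_singleton_self a')).symm
    have hlater : ∀ r ∈ Icc (m + 1) ℓ, Disjoint (K m) (K r) := fun r hr => by
      simp only [mem_Icc] at hr
      exact hdisj m hm.le r hr.2 (by omega)
    obtain ⟨u, hu, v, hv, huv⟩ := hconsec m hm
    obtain ⟨P, hcard, hP⟩ := ih (fun r hr hr' => hmid r (by omega) hr')
      (a := a') (fun r hr => disjoint_left.mp (hlater r hr) ha'm)
      ⟨v, hv, by linarith [dist_triangle a' u v, hdiam m hm.le a' ha'm u hu]⟩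
    have hfresh : Disjoint {a, b} (insert a' ((Icc (m + 1) ℓ).biUnion K)) := by
      simp only [disjoint_insert_left, disjoint_singleton_left, mem_insert, mem_biUnion, not_or,
        not_exists, not_and]
      exact ⟨⟨fun h => ha m hmIcc (h ▸ ha'm),
        fun r hr => ha r (Icc_subset_Icc_left m.le_succ hr)⟩, hba',
        fun r hr => disjoint_left.mp (hlater r hr) hb⟩
    obtain ⟨hP', hcard'⟩ := hP.insert (hab.mono (by linarith)) hfresh
    refine ⟨_, by rw [hcard', hcard]; omega, ?_⟩
    rw [← insert_Icc_add_one_left_eq_Icc hm.le, biUnion_insert, hKm']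
    simpa only [insert_union, singleton_union] using hP'

end

/-- The shifting lemma. A path of caplets `K₀, …, K_ℓ` (triangle caplets at the
ends, edge caplets in between), each of diameter at most `2λ`, with consecutive caplets at
distance at most `6λ`, can be repartitioned into `ℓ + 2` edge caplets of diameter at most
`10λ`. -/
theorem stmt_12 {X C : Type*} [MetricSpace X] [DecidableEq X]
    (c : X → C) (lam : ℝ) (hlam : 0 ≤ lam) (ℓ : ℕ) (hℓ : 1 ≤ ℓ)
    (K : ℕ → Finset X)
    (hdisj : ∀ r ≤ ℓ, ∀ s ≤ ℓ, r ≠ s → Disjoint (K r) (K s))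
    (h0 : (K 0).card = 3) (hlast : (K ℓ).card = 3)
    (hmid : ∀ r, 1 ≤ r → r < ℓ → (K r).card = 2)
    (hcol : ∀ r ≤ ℓ, ∀ j ∈ K r, ∀ j' ∈ K r, j ≠ j' → c j ≠ c j')
    (hdiam : ∀ r ≤ ℓ, ∀ j ∈ K r, ∀ j' ∈ K r, dist j j' ≤ 2 * lam)
    (hconsec : ∀ r < ℓ, ∃ j ∈ K r, ∃ j' ∈ K (r + 1), dist j j' ≤ 6 * lam) :
    ∃ P : Finset (Finset X),
      P.card = ℓ + 2 ∧
      P.biUnion id = (Finset.range (ℓ + 1)).biUnion K ∧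
      (∀ A ∈ P, ∀ B ∈ P, A ≠ B → Disjoint A B) ∧
      ∀ A ∈ P, A.card = 2 ∧
        (∀ j ∈ A, ∀ j' ∈ A, j ≠ j' → c j ≠ c j') ∧
        (∀ j ∈ A, ∀ j' ∈ A, dist j j' ≤ 10 * lam) := by
  obtain ⟨a, ha, v, hv, hav⟩ := hconsec 0 (by omega)
  have hlater : ∀ r ∈ Icc 1 ℓ, Disjoint (K 0) (K r) := fun r hr => by
    simp only [mem_Icc] at hr
    exact hdisj 0 (by omega) r hr.2 (by omega)
  obtain ⟨P, hcard, hP⟩ := exists_isEdgeCapletPartition_insert_biUnion_Icc hlam hℓ hdisj hlast hmid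
    hcol hdiam hconsec (fun r hr => disjoint_left.mp (hlater r hr) ha) ⟨v, hv, by linarith⟩
  have hrest : IsEdgeCaplet c (10 * lam) ((K 0).erase a) :=
    (isEdgeCaplet_erase h0 (hcol 0 (by omega)) (hdiam 0 (by omega)) ha).mono (by linarith)
  have hfresh : Disjoint ((K 0).erase a) (insert a ((Icc 1 ℓ).biUnion K)) := by
    rw [disjoint_insert_right, disjoint_biUnion_right]
    exact ⟨notMem_erase a _, fun r hr => (hlater r hr).mono_left (erase_subset a _)⟩
  obtain ⟨hP', hcard'⟩ := hP.insert hrest hfresh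
  refine ⟨insert ((K 0).erase a) P, by omega, ?_⟩
  rw [Nat.range_succ_eq_Icc_zero, ← insert_Icc_add_one_left_eq_Icc (Nat.zero_le ℓ),
    biUnion_insert (t := K)]
  rwa [erase_union_of_mem (mem_insert_self a _), union_insert,
    insert_eq_of_mem (mem_union_left _ ha)] at hP'
end

section
/- Let D be a finite set of points in a metric space, each assigned a color, let λ > 0, and let F* ⊆ D and σ : D → F* be such that d(j, σ(j)) ≤ λ for all j ∈ D and, for every i ∈ F* with σ⁻¹(i) nonempty and every color c₀, at most half of the points of σ⁻¹(i) have color c₀. Then for every i ∈ F* with σ⁻¹(i) nonempty, the cluster σ⁻¹(i) admits a partition into caplets (sets of size 2 or 3 of pairwise distinct colors, with at most one of size 3) each of diameter at most 2λ; in particular any two points of σ⁻¹(i) are at distance at most 2λ. -/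
/-!
Every cluster `σ⁻¹(i)` lies in the closed ball of radius `λ` around `i`, so its diameter is at
most `2λ`, and it suffices to split a nonempty finite set in which no color occupies more than
half of the `n` points into caplets. If `n ≤ 3` the set is a caplet itself. Otherwise remove a
point `a` of a most frequent color and a point `b` of a most frequent color among the others:
the counts of `c a` and `c b` drop by one, and any third color is no more frequent than these
two, so it has at most `n / 3` points, which for `n ≥ 4` is at most half of the `n - 2` points
left. Induction then splits the rest, and `{a, b}` is one more caplet.
-/

open Finset

section

variable {X C : Type*}

def IsHalfCapped [DecidableEq C] (c : X → C) (S : Finset X) : Prop :=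
  ∀ γ : C, 2 * #{x ∈ S | c x = γ} ≤ #S

def IsCaplet (c : X → C) (K : Finset X) : Prop :=
  (#K = 2 ∨ #K = 3) ∧ ∀ j ∈ K, ∀ j' ∈ K, j ≠ j' → c j ≠ c j'

structure IsCapletDecomposition_s14 [DecidableEq X] (c : X → C) (S : Finset X)
    (P : Finset (Finset X)) : Prop where
  biUnion_eq : P.biUnion id = S
  disjoint : ∀ K ∈ P, ∀ K' ∈ P, K ≠ K' → Disjoint K K'
  isCaplet : ∀ K ∈ P, IsCaplet c K
  card_filter_card_eq_three_le_one : #{K ∈ P | #K = 3} ≤ 1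

section

variable [DecidableEq X] {c : X → C} {S : Finset X}

theorem IsCapletDecomposition_s14.subset_of_mem {P : Finset (Finset X)}
    (hP : IsCapletDecomposition_s14 c S P) {K : Finset X} (hK : K ∈ P) : K ⊆ S :=
  hP.biUnion_eq ▸ subset_biUnion_of_mem id hK

theorem isCapletDecomposition_singleton (hS : IsCaplet c S) :
    IsCapletDecomposition_s14 c S {S} where
  biUnion_eq := by simp
  disjoint := by simp
  isCaplet := by simpa using hS
  card_filter_card_eq_three_le_one := (card_filter_le _ _).trans (card_singleton S).le

theorem IsCapletDecomposition_s14.insert_pair {P : Finset (Finset X)} {a b : X}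
    (hP : IsCapletDecomposition_s14 c (S \ {a, b}) P) (ha : a ∈ S) (hb : b ∈ S) (hab : c a ≠ c b) :
    IsCapletDecomposition_s14 c S (insert {a, b} P) := by
  have hne : a ≠ b := fun h => hab (congrArg c h)
  have hdisj : ∀ K ∈ P, Disjoint {a, b} K := fun K hK =>
    disjoint_of_subset_right (hP.subset_of_mem hK) disjoint_sdiff
  refine ⟨?_, ?_, ?_, ?_⟩
  · rw [biUnion_insert, hP.biUnion_eq, id, union_sdiff_of_subset (insert_subset ha (by simpa))]
  · simp only [mem_insert]
    rintro K (rfl | hK) K' (rfl | hK') hKK'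
    · exact absurd rfl hKK'
    · exact hdisj K' hK'
    · exact (hdisj K hK).symm
    · exact hP.disjoint K hK K' hK' hKK'
  · simp only [mem_insert, forall_eq_or_imp]
    refine ⟨⟨Or.inl (card_pair hne), ?_⟩, hP.isCaplet⟩
    simp only [mem_insert, mem_singleton]
    rintro j (rfl | rfl) j' (rfl | rfl) hjj'
    exacts [absurd rfl hjj', hab, hab.symm, absurd rfl hjj']
  · rw [filter_insert, if_neg (by simp [card_pair hne])]
    exact hP.card_filter_card_eq_three_le_one

end

section

variable [DecidableEq C] {c : X → C} {S : Finset X}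

theorem IsHalfCapped.isCaplet [DecidableEq X] (hS : IsHalfCapped c S) (hne : S.Nonempty)
    (h3 : #S ≤ 3) : IsCaplet c S := by
  obtain ⟨x, hx⟩ := hne
  have hx₁ : 1 ≤ #{y ∈ S | c y = c x} := card_pos.mpr ⟨x, mem_filter.mpr ⟨hx, rfl⟩⟩
  have := hS (c x)
  refine ⟨by omega, fun j hj j' hj' hjj' hcc => ?_⟩
  have h₂ : 2 ≤ #{y ∈ S | c y = c j} := by
    rw [← card_pair hjj']
    exact card_le_card (insert_subset (by simpa) (by simpa [hcc]))
  have := hS (c j)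
  omega

theorem IsHalfCapped.filter_color_ne_nonempty (hS : IsHalfCapped c S) {a : X} (ha : a ∈ S) :
    {x ∈ S | c x ≠ c a}.Nonempty := by
  by_contra h
  rw [not_nonempty_iff_eq_empty, filter_eq_empty_iff] at h
  have h₂ := hS (c a)
  rw [filter_true_of_mem (by simpa using h)] at h₂
  have := card_pos.mpr ⟨a, ha⟩
  omega

theorem card_filter_color_add_one_le (c : X → C) {T : Finset X} {a : X} (hT : T ⊆ S) (ha : a ∈ S)
    (haT : a ∉ T) : #{x ∈ T | c x = c a} + 1 ≤ #{x ∈ S | c x = c a} :=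
  card_lt_card <| (ssubset_iff_of_subset (filter_subset_filter _ hT)).mpr
    ⟨a, mem_filter.mpr ⟨ha, rfl⟩, fun h => haT (mem_filter.mp h).1⟩

theorem card_filter_three_colors_le (S : Finset X) (c : X → C) {α β γ : C} (hαβ : α ≠ β) (hαγ : α ≠ γ) (hβγ : β ≠ γ) :
    #{x ∈ S | c x = α} + #{x ∈ S | c x = β} + #{x ∈ S | c x = γ} ≤ #S := by
  have := sum_card_fiberwise_eq_card_filter S {α, β, γ} c
  rw [sum_insert (by simp [hαβ, hαγ]), sum_pair hβγ] at this
  have := card_filter_le S (fun x => c x ∈ ({α, β, γ} : Finset C))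
  omega

theorem IsHalfCapped.sdiff_pair [DecidableEq X] (hS : IsHalfCapped c S) (h4 : 4 ≤ #S) {a b : X}
    (ha : a ∈ S) (hb : b ∈ S) (hab : c a ≠ c b)
    (hamax : ∀ x ∈ S, #{y ∈ S | c y = c x} ≤ #{y ∈ S | c y = c a})
    (hbmax : ∀ x ∈ S, c x ≠ c a → #{y ∈ S | c y = c x} ≤ #{y ∈ S | c y = c b}) :
    IsHalfCapped c (S \ {a, b}) := by
  have hsub : S \ {a, b} ⊆ S := sdiff_subset
  have hcard : #(S \ {a, b}) + 2 = #S := by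
    rw [← card_pair (fun h => hab (congrArg c h))]
    exact card_sdiff_add_card_eq_card (insert_subset ha (by simpa))
  intro γ
  have hle : #{x ∈ S \ {a, b} | c x = γ} ≤ #{x ∈ S | c x = γ} :=
    card_le_card (filter_subset_filter _ hsub)
  by_cases hγa : γ = c a
  · subst hγa
    have := card_filter_color_add_one_le c hsub ha (by simp)
    have := hS (c a)
    omega
  by_cases hγb : γ = c b
  · subst hγb
    have := card_filter_color_add_one_le c hsub hb (by simp)
    have := hS (c b)
    omega
  obtain hempty | ⟨y, hy⟩ := {x ∈ S | c x = γ}.eq_empty_or_nonempty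
  · rw [hempty, card_empty] at hle
    omega
  obtain ⟨hyS, rfl⟩ := mem_filter.mp hy
  have := card_filter_three_colors_le S c hab (Ne.symm hγa) (Ne.symm hγb)
  have := hbmax y hyS hγa
  have := hamax b hb
  omega

theorem IsHalfCapped.exists_isCapletDecomposition [DecidableEq X] (hS : IsHalfCapped c S)
    (hne : S.Nonempty) : ∃ P, IsCapletDecomposition_s14 c S P := by
  induction S using Finset.strongInduction with
  | H S ih =>
  by_cases h3 : #S ≤ 3
  · exact ⟨{S}, isCapletDecomposition_singleton (hS.isCaplet hne h3)⟩
  obtain ⟨a, ha, hamax⟩ := S.exists_max_image (fun x => #{y ∈ S | c y = c x}) hne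
  obtain ⟨b, hb, hbmax⟩ := {x ∈ S | c x ≠ c a}.exists_max_image
    (fun x => #{y ∈ S | c y = c x}) (hS.filter_color_ne_nonempty ha)
  obtain ⟨hbS, hba⟩ := mem_filter.mp hb
  have hS' := hS.sdiff_pair (by omega) ha hbS (Ne.symm hba) hamax
    (fun x hx hxa => hbmax x (mem_filter.mpr ⟨hx, hxa⟩))
  have hpair : {a, b} ⊆ S := insert_subset ha (by simpa)
  have hne' : (S \ {a, b}).Nonempty := by
    rw [← card_pos, card_sdiff_of_subset hpair]
    have := card_le_two (a := a) (b := b)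
    omega
  obtain ⟨P, hP⟩ := ih (S \ {a, b}) (sdiff_ssubset hpair (insert_nonempty a {b})) hS' hne'
  exact ⟨_, hP.insert_pair ha hbS (Ne.symm hba)⟩

end

end

theorem stmt_14_general {X C : Type*} [MetricSpace X] [DecidableEq X] [DecidableEq C]
    (D : Finset X) (c : X → C) (lam : ℝ)
    (Fs : Finset X) (σ : X → X)
    (hd : ∀ j ∈ D, dist j (σ j) ≤ lam)
    (hcap : ∀ i ∈ Fs, (D.filter fun j => σ j = i).Nonempty → ∀ c₀ : C,
      ((D.filter fun j => σ j = i ∧ c j = c₀).card : ℝ) ≤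
        (1 / 2 : ℝ) * ((D.filter fun j => σ j = i).card : ℝ)) :
    ∀ i ∈ Fs, (D.filter fun j => σ j = i).Nonempty →
      (∃ P : Finset (Finset X),
        P.biUnion id = (D.filter fun j => σ j = i) ∧
        (∀ K ∈ P, ∀ K' ∈ P, K ≠ K' → Disjoint K K') ∧
        (∀ K ∈ P, (K.card = 2 ∨ K.card = 3) ∧
          (∀ j ∈ K, ∀ j' ∈ K, j ≠ j' → c j ≠ c j') ∧
          (∀ j ∈ K, ∀ j' ∈ K, dist j j' ≤ 2 * lam)) ∧
        (P.filter fun K => K.card = 3).card ≤ 1) ∧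
      (∀ j ∈ (D.filter fun j => σ j = i), ∀ j' ∈ (D.filter fun j => σ j = i),
        dist j j' ≤ 2 * lam) := by
  intro i hi hne
  have hdist : ∀ j ∈ D.filter (σ · = i), ∀ j' ∈ D.filter (σ · = i), dist j j' ≤ 2 * lam := by
    intro j hj j' hj'
    obtain ⟨hjD, rfl⟩ := mem_filter.mp hj
    obtain ⟨hj'D, hσ⟩ := mem_filter.mp hj'
    calc dist j j' ≤ dist j (σ j) + dist j' (σ j') := hσ ▸ dist_triangle_right j j' (σ j)
      _ ≤ 2 * lam := by linarith [hd j hjD, hd j' hj'D]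
  have hhalf : IsHalfCapped c (D.filter (σ · = i)) := fun γ => by
    have := hcap i hi hne γ
    rw [← filter_filter] at this
    exact_mod_cast (by linarith : (2 * #{x ∈ D.filter (σ · = i) | c x = γ} : ℝ) ≤
      #(D.filter (σ · = i)))
  obtain ⟨P, hP⟩ := hhalf.exists_isCapletDecomposition hne
  refine ⟨⟨P, hP.biUnion_eq, hP.disjoint, fun K hK => ⟨(hP.isCaplet K hK).1, (hP.isCaplet K hK).2,
    fun j hj j' hj' => hdist j (hP.subset_of_mem hK hj) j' (hP.subset_of_mem hK hj')⟩,
    hP.card_filter_card_eq_three_le_one⟩, hdist⟩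

/-- Every nonempty cluster of a `(1/2)`-capped clustering of radius `λ` admits a
caplet decomposition with caplets of diameter at most `2λ`; in particular any two points of a
cluster are at distance at most `2λ`. -/
theorem stmt_14 {X C : Type*} [MetricSpace X] [DecidableEq X] [DecidableEq C]
    (D : Finset X) (c : X → C) (lam : ℝ) (hlam : 0 < lam)
    (Fs : Finset X) (σ : X → X) (hF : Fs ⊆ D)
    (hσ : ∀ j ∈ D, σ j ∈ Fs) (hd : ∀ j ∈ D, dist j (σ j) ≤ lam)
    (hcap : ∀ i ∈ Fs, (D.filter fun j => σ j = i).Nonempty → ∀ c₀ : C,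
      ((D.filter fun j => σ j = i ∧ c j = c₀).card : ℝ) ≤
        (1 / 2 : ℝ) * ((D.filter fun j => σ j = i).card : ℝ)) :
    ∀ i ∈ Fs, (D.filter fun j => σ j = i).Nonempty →
      (∃ P : Finset (Finset X),
        P.biUnion id = (D.filter fun j => σ j = i) ∧
        (∀ K ∈ P, ∀ K' ∈ P, K ≠ K' → Disjoint K K') ∧
        (∀ K ∈ P, (K.card = 2 ∨ K.card = 3) ∧
          (∀ j ∈ K, ∀ j' ∈ K, j ≠ j' → c j ≠ c j') ∧
          (∀ j ∈ K, ∀ j' ∈ K, dist j j' ≤ 2 * lam)) ∧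
        (P.filter fun K => K.card = 3).card ≤ 1) ∧
      (∀ j ∈ (D.filter fun j => σ j = i), ∀ j' ∈ (D.filter fun j => σ j = i),
        dist j j' ≤ 2 * lam) :=
  stmt_14_general D c lam Fs σ hd hcap
end
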